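/- Suppose a Z-valued tree z of depth d is α-shattered by a class F ⊆ ℝ^Z. Then any sequential β-cover of F on z with β < α/2 has size at least 2^d; that is, N_∞(F, z, β) ≥ 2^d. -/

import Mathlib

/-- The node of a binary tree at depth `t` along the sign path `ε` is indexed by the
prefix `(ε 0, …, ε (t-1))`. -/
def pathPrefix (ε : ℕ → Bool) (t : ℕ) : List Bool := List.ofFn (fun i : Fin t => ε i)

/-- The pair of trees `(x, s)` of depth `d` is `α`-shattered by `F`: for every sign
pattern `ε` there is `f ∈ F` achieving margin `α/2` with the prescribed sign at every
node along the path `ε`. -/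
def Shatters {Z : Type*} (F : Set (Z → ℝ)) (α : ℝ) (d : ℕ)
    (x : List Bool → Z) (s : List Bool → ℝ) : Prop :=
  ∀ ε : ℕ → Bool, ∃ f ∈ F, ∀ t < d,
    (if ε t then f (x (pathPrefix ε t)) - s (pathPrefix ε t)
      else s (pathPrefix ε t) - f (x (pathPrefix ε t))) ≥ α / 2

/-- `F` `α`-shatters some pair of trees of depth `d`. -/
def IsShattered {Z : Type*} (F : Set (Z → ℝ)) (α : ℝ) (d : ℕ) : Prop :=
  ∃ x s, Shatters F α d x s

/-- The sequential fat-shattering dimension of `F` at scale `α`: the largest depth `d`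
(possibly `⊤`) such that some pair of trees of depth `d` is `α`-shattered by `F`. -/
noncomputable def sfat {Z : Type*} (F : Set (Z → ℝ)) (α : ℝ) : ℕ∞ :=
  sSup {n : ℕ∞ | ∃ d : ℕ, n = (d : ℕ∞) ∧ IsShattered F α d}

/-!
Distinct leaves `ε ≠ ε'` of the shattered tree first disagree at some depth `t < d`. There
both paths sit at the same node, and the shattering witnesses `f_ε`, `f_ε'` lie on opposite
sides of the threshold `s` at that node, at distance `≥ α/2` each. Cover elements within
`β < α/2` of them therefore disagree at that node, so the `2^d` leaves get distinct cover
elements.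
-/

lemma pathPrefix_congr {ε ε' : ℕ → Bool} {t : ℕ} (h : ∀ i < t, ε i = ε' i) :
    pathPrefix ε t = pathPrefix ε' t :=
  congrArg List.ofFn (funext fun i => h i i.2)

lemma exists_lt_ne_and_pathPrefix_eq {ε ε' : ℕ → Bool} {d : ℕ} (h : ∃ t < d, ε t ≠ ε' t) :
    ∃ t < d, ε t ≠ ε' t ∧ pathPrefix ε t = pathPrefix ε' t := by
  classical
  obtain ⟨htd, hne⟩ := Nat.find_spec h
  refine ⟨Nat.find h, htd, hne, pathPrefix_congr fun i hi => ?_⟩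
  by_contra hi'
  exact Nat.find_min h hi ⟨hi.trans htd, hi'⟩

lemma ne_of_abs_sub_le_of_margin {a b p q c α β : ℝ} (hβ : β < α / 2)
    (hp : α / 2 ≤ p - c) (hq : α / 2 ≤ c - q) (ha : |a - p| ≤ β) (hb : |b - q| ≤ β) :
    a ≠ b := by
  rintro rfl
  linarith [(abs_le.mp ha).1, (abs_le.mp hb).2]

lemma ne_of_shatters_of_cover {Z : Type*} {d : ℕ} {α β : ℝ} (hβ : β < α / 2)
    {z : List Bool → Z} {s : List Bool → ℝ} {f : (ℕ → Bool) → Z → ℝ}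
    (hf : ∀ ε, ∀ t < d, (if ε t then f ε (z (pathPrefix ε t)) - s (pathPrefix ε t)
      else s (pathPrefix ε t) - f ε (z (pathPrefix ε t))) ≥ α / 2)
    {v : (ℕ → Bool) → List Bool → ℝ}
    (hv : ∀ ε, ∀ t < d, |v ε (pathPrefix ε t) - f ε (z (pathPrefix ε t))| ≤ β)
    {ε ε' : ℕ → Bool} (hεε' : ∃ t < d, ε t ≠ ε' t) : v ε ≠ v ε' := by
  obtain ⟨t, htd, hne, hpre⟩ := exists_lt_ne_and_pathPrefix_eq hεε'
  have hfε' := hf ε' t htd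
  have hvε' := hv ε' t htd
  rw [← hpre] at hfε' hvε'
  intro hvv
  have hvε := hv ε t htd
  rw [hvv] at hvε
  have hfε := hf ε t htd
  cases hε : ε t <;> cases hε' : ε' t <;> simp only [hε, hε'] at hne hfε hfε'
  · exact absurd rfl hne
  · exact ne_of_abs_sub_le_of_margin hβ hfε' hfε hvε' hvε rfl
  · exact ne_of_abs_sub_le_of_margin hβ hfε hfε' hvε hvε' rfl
  · exact absurd rfl hne

def padFalse {d : ℕ} (e : Fin d → Bool) (t : ℕ) : Bool :=
  if h : t < d then e ⟨t, h⟩ else false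

lemma exists_lt_padFalse_ne {d : ℕ} {e e' : Fin d → Bool} (h : e ≠ e') :
    ∃ t < d, padFalse e t ≠ padFalse e' t := by
  obtain ⟨i, hi⟩ := Function.ne_iff.mp h
  exact ⟨i, i.2, by simpa [padFalse] using hi⟩

/-- if a `Z`-valued tree `z` of depth `d` is `α`-shattered by `F` (witnessed
by `s`), then any sequential `β`-cover `V` of `F` on `z` with `β < α/2` has at least `2^d`
elements; i.e. `N_∞(F, z, β) ≥ 2^d`. -/
theorem stmt8 {Z : Type*} (F : Set (Z → ℝ)) (d : ℕ) (α β : ℝ) (hβ : β < α / 2)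
    (z : List Bool → Z) (s : List Bool → ℝ) (hshat : Shatters F α d z s)
    (V : Finset (List Bool → ℝ))
    (hcover : ∀ f ∈ F, ∀ ε : ℕ → Bool, ∃ v ∈ V, ∀ t < d,
      |v (pathPrefix ε t) - f (z (pathPrefix ε t))| ≤ β) :
    2 ^ d ≤ V.card := by
  choose f hfF hf using hshat
  choose v hvV hv using fun ε => hcover (f ε) (hfF ε) ε
  calc 2 ^ d = (Finset.univ : Finset (Fin d → Bool)).card := by simp
    _ ≤ V.card :=
      Finset.card_le_card_of_injOn (fun e => v (padFalse e)) (fun e _ => hvV _)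
        fun e _ e' _ hee' => by_contra fun hne =>
          ne_of_shatters_of_cover hβ hf hv (exists_lt_padFalse_ne hne) hee'
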